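/- Let v ∈ ℝ^n \ {0} and let Q ≥ 1 be a real number. Then there exists a T-periodic vector ω ∈ ℝ^n \ {0} such that ‖v − ω‖ ≤ √(n−1) (TQ)^{−1} and ‖v‖^{−1} ≤ T ≤ √n ‖v‖^{−1} Q^{n−1}. -/

import Mathlib

/-!
Minkowski's linear forms theorem, applied to the forms `y₀` and `yⱼ - xⱼ y₀` (determinant `1`)
with bounds `Q^d` and `Q⁻¹`, gives simultaneous Dirichlet approximation: some `0 < q ≤ Q^d` has
`q xⱼ` within `Q⁻¹` of an integer for every `j`. Apply it to the coordinates of `v` divided by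
`|vᵢ|`, where `vᵢ` is a coordinate of largest absolute value, and set `T = q / |vᵢ|`.
Then `T vᵢ = ±q` is an integer, so rounding `T v` coordinatewise and dividing by `T` gives a
`T`-periodic `ω` with `ωᵢ = vᵢ` and every other coordinate within `(TQ)⁻¹` of `v`; the bounds
on `T` come from `|vᵢ| ≤ ‖v‖ ≤ √n |vᵢ|`.
-/

open MeasureTheory Submodule

theorem exists_ne_zero_int_abs_linearMap_le {ι : Type*} [Fintype ι] [Nonempty ι]
    (L : (ι → ℝ) →ₗ[ℝ] (ι → ℝ)) (hL : LinearMap.det L ≠ 0) {r : ι → ℝ} (hr : ∀ k, 0 ≤ r k)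
    (hdet : |LinearMap.det L| ≤ ∏ k, r k) :
    ∃ z : ι → ℤ, z ≠ 0 ∧ ∀ k, |L (fun j ↦ (z j : ℝ)) k| ≤ r k := by
  set box : Set (ι → ℝ) := Set.univ.pi fun k ↦ Set.Icc (-r k) (r k)
  have hsymm : ∀ y ∈ L ⁻¹' box, -y ∈ L ⁻¹' box := by
    intro y hy k _
    have := hy k (Set.mem_univ k)
    simp only [Set.mem_Icc, map_neg, Pi.neg_apply] at this ⊢
    constructor <;> linarith [this.1, this.2]
  have hconv : Convex ℝ (L ⁻¹' box) :=
    (convex_pi fun k _ ↦ convex_Icc _ _).linear_preimage L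
  have hcpt : IsCompact (L ⁻¹' box) :=
    (L.equivOfDetNeZero hL).toContinuousLinearEquiv.toHomeomorph.isCompact_preimage.2
      (isCompact_univ_pi fun _ ↦ isCompact_Icc)
  have hvol : volume (ZSpan.fundamentalDomain (Pi.basisFun ℝ ι)) *
      2 ^ Module.finrank ℝ (ι → ℝ) ≤ volume (L ⁻¹' box) := by
    have habs : 0 < |LinearMap.det L| := abs_pos.2 hL
    rw [Measure.addHaar_preimage_linearMap _ hL, volume_pi_pi, ZSpan.fundamentalDomain_pi_basisFun,
      volume_pi_pi]
    simp only [Real.volume_Icc, Real.volume_Ico, sub_zero, ENNReal.ofReal_one,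
      Finset.prod_const_one, one_mul, Module.finrank_fintype_fun_eq_card]
    rw [← ENNReal.ofReal_prod_of_nonneg (fun k _ ↦ by linarith [hr k]),
      ← ENNReal.ofReal_mul (abs_nonneg _), ← ENNReal.ofReal_ofNat,
      ← ENNReal.ofReal_pow (by norm_num)]
    refine ENNReal.ofReal_le_ofReal ?_
    rw [abs_inv, le_inv_mul_iff₀ habs]
    calc |LinearMap.det L| * 2 ^ Fintype.card ι ≤ (∏ k, r k) * ∏ _k : ι, (2 : ℝ) := by
          rw [Finset.prod_const, Finset.card_univ]; gcongr
      _ = ∏ k, (r k - -r k) := by rw [← Finset.prod_mul_distrib]; congr 1; ext; ring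
  have : Countable (span ℤ (Set.range (Pi.basisFun ℝ ι))).toAddSubgroup :=
    inferInstanceAs (Countable (span ℤ (Set.range (Pi.basisFun ℝ ι))))
  obtain ⟨⟨y, hy⟩, hy0, hys⟩ := exists_ne_zero_mem_lattice_of_measure_mul_two_pow_le_measure
    (ZSpan.isAddFundamentalDomain' (Pi.basisFun ℝ ι) volume) hsymm hconv hcpt hvol
  choose z hz using fun k ↦ ((Pi.basisFun ℝ ι).mem_span_iff_repr_mem ℤ y).mp hy k
  have hyz : (fun j ↦ (z j : ℝ)) = y := by ext j; simpa using hz j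
  refine ⟨z, fun h ↦ hy0 ?_, fun k ↦ ?_⟩
  · ext j; simp [← hyz, h]
  · rw [hyz]; exact abs_le.2 (hys k (Set.mem_univ k))

def dirichletForms {ι : Type*} (x : ι → ℝ) : (Option ι → ℝ) →ₗ[ℝ] (Option ι → ℝ) :=
  LinearMap.id - (LinearMap.proj none).smulRight (fun k ↦ Option.elim k 0 x)

@[simp] lemma dirichletForms_apply_none {ι : Type*} (x : ι → ℝ) (y : Option ι → ℝ) :
    dirichletForms x y none = y none := by
  simp [dirichletForms]

@[simp] lemma dirichletForms_apply_some {ι : Type*} (x : ι → ℝ) (y : Option ι → ℝ) (j : ι) :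
    dirichletForms x y (some j) = y (some j) - y none * x j := by
  simp [dirichletForms]

lemma det_dirichletForms {ι : Type*} [Fintype ι] [DecidableEq ι] (x : ι → ℝ) :
    LinearMap.det (dirichletForms x) = 1 := by
  rw [← LinearMap.det_toMatrix']
  have : LinearMap.toMatrix' (dirichletForms x) =
      1 + Matrix.replicateCol Unit (fun k ↦ -Option.elim k 0 x) *
        Matrix.replicateRow Unit (Pi.single none (1 : ℝ)) := by
    ext a b
    rcases a with _ | a <;> rcases b with _ | b <;>
      simp [LinearMap.toMatrix'_apply, dirichletForms, Matrix.one_apply, Matrix.mul_apply,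
        Pi.single_apply]
  rw [this, Matrix.det_one_add_replicateCol_mul_replicateRow]
  simp

theorem exists_nat_abs_mul_sub_round_le_inv {ι : Type*} [Fintype ι] (x : ι → ℝ) {Q : ℝ}
    (hQ : 1 ≤ Q) :
    ∃ q : ℕ, 0 < q ∧ (q : ℝ) ≤ Q ^ Fintype.card ι ∧ ∀ j, |q * x j - round (q * x j)| ≤ Q⁻¹ := by
  classical
  have hQ0 : 0 < Q := by linarith
  -- For `Q > 2` Minkowski's `z` cannot have `z none = 0`, since then `|z (some j)| ≤ Q⁻¹ < 1`.
  rcases le_or_gt Q 2 with hQ2 | hQ2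
  · refine ⟨1, one_pos, by simpa using one_le_pow₀ hQ, fun j ↦ ?_⟩
    calc |((1 : ℕ) : ℝ) * x j - round (((1 : ℕ) : ℝ) * x j)| ≤ 1 / 2 := abs_sub_round _
      _ ≤ Q⁻¹ := by rw [one_div]; gcongr
  set r : Option ι → ℝ := fun k ↦ Option.elim k (Q ^ Fintype.card ι) fun _ ↦ Q⁻¹
  have hr : ∀ k, 0 ≤ r k := by rintro (_ | _) <;> simp only [r, Option.elim] <;> positivity
  have hprod : |LinearMap.det (dirichletForms x)| ≤ ∏ k, r k := by
    simp [r, det_dirichletForms, Fintype.prod_option, hQ0.ne']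
  obtain ⟨z, hz0, hz⟩ := exists_ne_zero_int_abs_linearMap_le _
    (by simp [det_dirichletForms]) hr hprod
  have hzq : |(z none : ℝ)| ≤ Q ^ Fintype.card ι := by simpa [r] using hz none
  have hzj : ∀ j, |(z (some j) : ℝ) - z none * x j| ≤ Q⁻¹ := fun j ↦ by
    simpa [r] using hz (some j)
  have hnone : z none ≠ 0 := by
    intro h
    refine hz0 (funext fun k ↦ ?_)
    rcases k with _ | j
    · exact h
    · have : |(z (some j) : ℝ)| < 1 := by
        simpa [h] using (hzj j).trans_lt (inv_lt_one_of_one_lt₀ (by linarith))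
      exact_mod_cast Int.abs_lt_one_iff.1 (by exact_mod_cast this)
  refine ⟨(z none).natAbs, Int.natAbs_pos.2 hnone, by simpa [Nat.cast_natAbs] using hzq,
    fun j ↦ ?_⟩
  rw [Nat.cast_natAbs, Int.cast_abs]
  rcases abs_choice (z none : ℝ) with h | h <;> rw [h]
  · calc _ ≤ |(z none : ℝ) * x j - z (some j)| := round_le _ (z (some j))
      _ ≤ Q⁻¹ := by rw [abs_sub_comm]; exact hzj j
  · calc _ ≤ |-(z none : ℝ) * x j - ((-z (some j) : ℤ) : ℝ)| := round_le _ _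
      _ = |(z (some j) : ℝ) - z none * x j| := by push_cast; ring_nf
      _ ≤ Q⁻¹ := hzj j

lemma EuclideanSpace.norm_le_sqrt_card_mul {ι : Type*} [Fintype ι] (w : EuclideanSpace ℝ ι)
    (s : Finset ι) (hs : ∀ k ∉ s, w k = 0) {ε : ℝ} (hw : ∀ k ∈ s, |w k| ≤ ε) :
    ‖w‖ ≤ √(s.card : ℝ) * ε := by
  rcases s.eq_empty_or_nonempty with rfl | ⟨k, hk⟩
  · simp [show w = 0 from PiLp.ext fun k ↦ hs k (Finset.notMem_empty k)]
  have hε : 0 ≤ ε := (abs_nonneg _).trans (hw k hk)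
  calc ‖w‖ = √(∑ k ∈ s, ‖w k‖ ^ 2) := by
        rw [EuclideanSpace.norm_eq,
          Finset.sum_subset (Finset.subset_univ s) fun k _ hk ↦ by simp [hs k hk]]
    _ ≤ √(∑ _k ∈ s, ε ^ 2) := by
        gcongr with k hk
        rw [Real.norm_eq_abs]
        exact hw k hk
    _ = √(s.card : ℝ) * ε := by
        rw [Finset.sum_const, nsmul_eq_mul, Real.sqrt_mul (Nat.cast_nonneg _), Real.sqrt_sq hε]

lemma EuclideanSpace.norm_le_sqrt_card_mul_abs_apply {ι : Type*} [Fintype ι]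
    {v : EuclideanSpace ℝ ι} {i : ι} (hi : ∀ k, |v k| ≤ |v i|) :
    ‖v‖ ≤ √(Fintype.card ι : ℝ) * |v i| := by
  simpa using EuclideanSpace.norm_le_sqrt_card_mul v Finset.univ (by simp) fun k _ ↦ hi k

lemma exists_abs_apply_pos_forall_abs_apply_le {ι : Type*} [Finite ι] {v : ι → ℝ} (hv : v ≠ 0) :
    ∃ i, 0 < |v i| ∧ ∀ k, |v k| ≤ |v i| := by
  obtain ⟨j, hj⟩ := Function.ne_iff.1 hv
  have : Nonempty ι := ⟨j⟩
  obtain ⟨i, hi⟩ := Finite.exists_max fun k ↦ |v k|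
  exact ⟨i, (abs_pos.2 hj).trans_le (hi j), hi⟩

lemma exists_int_eq_div_abs_mul (q : ℤ) {a : ℝ} (ha : a ≠ 0) : ∃ m : ℤ, q / |a| * a = m := by
  rcases abs_choice a with h | h <;> rw [h]
  · exact ⟨q, by field_simp⟩
  · exact ⟨-q, by push_cast; field_simp⟩

noncomputable section

namespace Elliptic

def IsPeriodic (n : ℕ) (T : ℝ) (ω : EuclideanSpace ℝ (Fin n)) : Prop :=
  0 < T ∧ ∃ k : Fin n → ℤ, ∀ j, T * ω j = (k j : ℝ)

def periodicApprox {ι : Type*} (T : ℝ) (v : EuclideanSpace ℝ ι) : EuclideanSpace ℝ ι :=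
  T⁻¹ • WithLp.toLp 2 fun k ↦ (round (T * v k) : ℝ)

section periodicApprox

variable {ι : Type*} {T : ℝ} {v : EuclideanSpace ℝ ι}

lemma mul_periodicApprox_apply (hT : T ≠ 0) (k : ι) :
    T * periodicApprox T v k = round (T * v k) := by
  simp [periodicApprox, hT]

lemma isPeriodic_periodicApprox {n : ℕ} (v : EuclideanSpace ℝ (Fin n)) (hT : 0 < T) :
    IsPeriodic n T (periodicApprox T v) :=
  ⟨hT, _, mul_periodicApprox_apply hT.ne'⟩

lemma periodicApprox_apply_eq {k : ι} (hT : T ≠ 0) (hk : ∃ m : ℤ, T * v k = m) :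
    periodicApprox T v k = v k := by
  obtain ⟨m, hm⟩ := hk
  refine mul_left_cancel₀ hT ?_
  rw [mul_periodicApprox_apply hT, hm, round_intCast]

lemma abs_sub_periodicApprox_apply (hT : 0 < T) (k : ι) :
    |(v - periodicApprox T v) k| = T⁻¹ * |T * v k - round (T * v k)| := by
  have : (v - periodicApprox T v) k = T⁻¹ * (T * v k - round (T * v k)) := by
    simp only [PiLp.sub_apply, mul_sub, inv_mul_cancel_left₀ hT.ne']
    rw [← mul_periodicApprox_apply hT.ne', inv_mul_cancel_left₀ hT.ne']
  rw [this, abs_mul, abs_of_pos (inv_pos.2 hT)]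

lemma norm_sub_periodicApprox_le [Fintype ι] {ε : ℝ} (hT : 0 < T) {i : ι}
    (hi : ∃ m : ℤ, T * v i = m) (hε : ∀ k ≠ i, |T * v k - round (T * v k)| ≤ ε) :
    ‖v - periodicApprox T v‖ ≤ √(Fintype.card ι - 1 : ℝ) * (T⁻¹ * ε) := by
  classical
  calc ‖v - periodicApprox T v‖ ≤ √((Finset.univ.erase i).card : ℝ) * (T⁻¹ * ε) := by
        refine EuclideanSpace.norm_le_sqrt_card_mul _ _ (fun k hk ↦ ?_) fun k hk ↦ ?_
        · obtain rfl : k = i := by simpa using hk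
          simp [periodicApprox_apply_eq hT.ne' hi]
        · rw [abs_sub_periodicApprox_apply hT]
          exact mul_le_mul_of_nonneg_left (hε k (Finset.ne_of_mem_erase hk)) (inv_nonneg.2 hT.le)
    _ = √(Fintype.card ι - 1 : ℝ) * (T⁻¹ * ε) := by
        rw [Finset.card_erase_of_mem (Finset.mem_univ i), Finset.card_univ,
          Nat.cast_pred (Fintype.card_pos_iff.2 ⟨i⟩)]

end periodicApprox

theorem dirichlet_periodic_approximation_general
    (n : ℕ)
    (v : EuclideanSpace ℝ (Fin n)) (hv : v ≠ 0)
    (Q : ℝ) (hQ : 1 ≤ Q) :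
    ∃ (T : ℝ) (ω : EuclideanSpace ℝ (Fin n)), ω ≠ 0 ∧ IsPeriodic n T ω ∧
      ‖v - ω‖ ≤ Real.sqrt (n - 1) * (T * Q)⁻¹ ∧
      ‖v‖⁻¹ ≤ T ∧ T ≤ Real.sqrt n * ‖v‖⁻¹ * Q ^ (n - 1) := by
  obtain ⟨i, hvi, hi⟩ :=
    exists_abs_apply_pos_forall_abs_apply_le (v := v.ofLp) (by simpa using hv)
  obtain ⟨q, hq, hqQ, hround⟩ :=
    exists_nat_abs_mul_sub_round_le_inv (fun k : {k // k ≠ i} ↦ v k / |v i|) hQ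
  rw [Fintype.card_subtype_compl, Fintype.card_subtype_eq, Fintype.card_fin] at hqQ
  set T : ℝ := q / |v i|
  have hT : 0 < T := by positivity
  have hTv : ∀ k ≠ i, |T * v k - round (T * v k)| ≤ Q⁻¹ := fun k hk ↦ by
    simpa only [T, div_mul_eq_mul_div, mul_div_assoc] using hround ⟨k, hk⟩
  have hTvi : ∃ m : ℤ, T * v i = m := exists_int_eq_div_abs_mul q (abs_pos.1 hvi)
  have hωi := periodicApprox_apply_eq hT.ne' hTvi
  refine ⟨T, periodicApprox T v, fun h ↦ abs_pos.1 hvi (by simp [← hωi, h]),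
    isPeriodic_periodicApprox v hT, ?_, ?_, ?_⟩
  · exact (norm_sub_periodicApprox_le hT hTvi hTv).trans_eq
      (by rw [Fintype.card_fin, mul_inv])
  · calc ‖v‖⁻¹ ≤ |v i|⁻¹ := inv_anti₀ hvi (by simpa using PiLp.norm_apply_le v i)
      _ ≤ T := le_mul_of_one_le_left (inv_nonneg.2 hvi.le) (Nat.one_le_cast.2 hq)
  · have hvi_inv : |v i|⁻¹ ≤ √n * ‖v‖⁻¹ := by
      rw [← div_eq_mul_inv, le_div_iff₀ (norm_pos_iff.2 hv), inv_mul_le_iff₀ hvi, mul_comm]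
      simpa using EuclideanSpace.norm_le_sqrt_card_mul_abs_apply hi
    calc T = q * |v i|⁻¹ := div_eq_mul_inv _ _
      _ ≤ Q ^ (n - 1) * (√n * ‖v‖⁻¹) := by gcongr
      _ = √n * ‖v‖⁻¹ * Q ^ (n - 1) := by ring

/-- **Dirichlet approximation by periodic vectors** (Lemma 5.4).
Let `v ∈ ℝ^n \ {0}` and `Q ≥ 1`.  Then there exists a `T`-periodic vector
`ω ∈ ℝ^n \ {0}` such that `‖v − ω‖ ≤ √(n−1) (TQ)⁻¹` and
`‖v‖⁻¹ ≤ T ≤ √n ‖v‖⁻¹ Q^{n−1}`. -/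
theorem dirichlet_periodic_approximation
    (n : ℕ) (hn : 2 ≤ n)
    (v : EuclideanSpace ℝ (Fin n)) (hv : v ≠ 0)
    (Q : ℝ) (hQ : 1 ≤ Q) :
    ∃ (T : ℝ) (ω : EuclideanSpace ℝ (Fin n)), ω ≠ 0 ∧ IsPeriodic n T ω ∧
      ‖v - ω‖ ≤ Real.sqrt (n - 1) * (T * Q)⁻¹ ∧
      ‖v‖⁻¹ ≤ T ∧ T ≤ Real.sqrt n * ‖v‖⁻¹ * Q ^ (n - 1) :=
  dirichlet_periodic_approximation_general n v hv Q hQ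

end Elliptic
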